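/- Mean-square growth bound: Let T > 0, let A, B_1, …, B_J : [0,T] → ℂ^{N×N} be continuous, let Σ : [0,T] → ℂ^{N×N} be differentiable, Hermitian and positive semidefinite for every t, and satisfy Σ'(t) = A(t) Σ(t) + Σ(t) A(t)† + Σ_{j=1}^{J} B_j(t) Σ(t) B_j(t)†. Let K(t) := (1/2)( A(t) + A(t)† + Σ_{j=1}^{J} B_j(t)† B_j(t) ), and suppose γ : [0,T] → ℝ is continuous with γ(t)·I − K(t) positive semidefinite for all t. Then for all t ∈ [0,T]: tr(Σ(t)) ≤ exp( 2 ∫_0^t γ(s) ds ) · tr(Σ(0)). -/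

import Mathlib

/-!
With `f(t) = Re tr Σ(t)`, cyclicity of the trace gives `f' = Re tr(AΣ + ΣA† + Σ_j B_j Σ B_j†)
= 2 Re tr(K Σ)`, and `tr((γ I - K) Σ) ≥ 0` because the trace of a product of two positive
semidefinite matrices is nonnegative. Thus `f' ≤ 2γ f`, so `exp(-2∫_0^t γ) f(t)` is
nonincreasing (Grönwall).
-/

open Matrix ComplexOrder

/-- The Lyapunov matrix `K(t) := (1/2)(A(t) + A(t)† + Σ_j B_j(t)† B_j(t))`. -/
noncomputable def lyapK {N J : ℕ} (A : ℝ → Matrix (Fin N) (Fin N) ℂ)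
    (B : Fin J → ℝ → Matrix (Fin N) (Fin N) ℂ) (t : ℝ) : Matrix (Fin N) (Fin N) ℂ :=
  (1 / 2 : ℂ) • (A t + (A t)ᴴ + ∑ j : Fin J, (B j t)ᴴ * B j t)

open Set Real

namespace Matrix

variable {n : Type*} [Fintype n]

open scoped MatrixOrder in
theorem PosSemidef.trace_mul_nonneg {𝕜 : Type*} [RCLike 𝕜] {P Q : Matrix n n 𝕜}
    (hP : P.PosSemidef) (hQ : Q.PosSemidef) : 0 ≤ (P * Q).trace := by
  classical
  obtain ⟨R, rfl⟩ := CStarAlgebra.nonneg_iff_eq_star_mul_self.mp hP.nonneg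
  rw [star_eq_conjTranspose, mul_assoc, trace_mul_comm]
  exact (hQ.mul_mul_conjTranspose_same R).trace_nonneg

theorem re_trace_mul_le_of_posSemidef_smul_one_sub [DecidableEq n] {K S : Matrix n n ℂ} {c : ℝ}
    (hK : ((c : ℂ) • 1 - K).PosSemidef) (hS : S.PosSemidef) :
    (K * S).trace.re ≤ c * S.trace.re := by
  have h := Complex.nonneg_iff.mp (hK.trace_mul_nonneg hS) |>.1
  simp only [sub_mul, smul_mul, one_mul, trace_sub, trace_smul, smul_eq_mul, Complex.sub_re,
    Complex.re_ofReal_mul] at h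
  linarith

theorem trace_lyapunov_eq_trace_mul {ι R : Type*} [Fintype ι] [CommSemiring R] [StarRing R]
    (A S : Matrix n n R) (B : ι → Matrix n n R) :
    (A * S + S * Aᴴ + ∑ j, B j * S * (B j)ᴴ).trace
      = ((A + Aᴴ + ∑ j, (B j)ᴴ * B j) * S).trace := by
  simp only [add_mul, Finset.sum_mul, trace_add, trace_sum, trace_mul_comm S, mul_assoc,
    trace_mul_comm (B _)]

theorem hasDerivWithinAt_re_trace {M : ℝ → Matrix n n ℂ} {M' : Matrix n n ℂ} {s : Set ℝ} {x : ℝ}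
    (h : ∀ i, HasDerivWithinAt (fun t => M t i i) (M' i i) s x) :
    HasDerivWithinAt (fun t => (M t).trace.re) M'.trace.re s x := by
  have htr : HasDerivWithinAt (fun t => (M t).trace) M'.trace s x := by
    simpa [trace, diag] using HasDerivWithinAt.fun_sum fun i (_ : i ∈ Finset.univ) => h i
  exact Complex.reCLM.hasFDerivAt.comp_hasDerivWithinAt x htr

end Matrix

theorem trace_lyapunov_eq_two_mul_trace_lyapK_mul {N J : ℕ} (A : ℝ → Matrix (Fin N) (Fin N) ℂ)
    (B : Fin J → ℝ → Matrix (Fin N) (Fin N) ℂ) (S : Matrix (Fin N) (Fin N) ℂ) (t : ℝ) :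
    (A t * S + S * (A t)ᴴ + ∑ j, B j t * S * (B j t)ᴴ).trace = 2 * (lyapK A B t * S).trace := by
  rw [trace_lyapunov_eq_trace_mul, lyapK, smul_mul, trace_smul, smul_eq_mul]
  ring

theorem ContinuousOn.exists_continuous_eqOn_Icc {β : Type*} [TopologicalSpace β] {g : ℝ → β}
    {a b : ℝ} (hab : a ≤ b) (hg : ContinuousOn g (Icc a b)) :
    ∃ g' : ℝ → β, Continuous g' ∧ EqOn g' g (Icc a b) :=
  ⟨IccExtend hab ((Icc a b).domRestrict g), hg.domRestrict.Icc_extend',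
    fun _ hx => IccExtend_of_mem _ _ hx⟩

theorem le_exp_integral_mul_of_hasDerivWithinAt_of_continuous {f f' γ : ℝ → ℝ} {a b : ℝ}
    (hγ : Continuous γ) (hf : ∀ s ∈ Icc a b, HasDerivWithinAt f (f' s) (Icc a b) s)
    (hle : ∀ s ∈ Icc a b, f' s ≤ γ s * f s) :
    ∀ t ∈ Icc a b, f t ≤ exp (∫ s in a..t, γ s) * f a := by
  set G : ℝ → ℝ := fun t => ∫ s in a..t, γ s
  have hG : ∀ s, HasDerivAt G (γ s) s := fun s => (hγ.integral_hasStrictDerivAt a s).hasDerivAt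
  have hanti : AntitoneOn (fun s => exp (-G s) * f s) (Icc a b) := by
    refine antitoneOn_of_hasDerivWithinAt_nonpos (convex_Icc a b)
      (f' := fun s => exp (-G s) * (f' s - γ s * f s)) ?_ (fun s hs => ?_) (fun s hs => ?_)
    · have hG_cont : Continuous G := continuous_iff_continuousAt.mpr fun s => (hG s).continuousAt
      exact hG_cont.neg.rexp.continuousOn.mul fun s hs => (hf s hs).continuousWithinAt
    · rw [interior_Icc] at hs ⊢
      exact ((hG s).fun_neg.exp.hasDerivWithinAt.fun_mul
        ((hf s (Ioo_subset_Icc_self hs)).mono Ioo_subset_Icc_self)).congr_deriv (by ring)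
    · rw [interior_Icc] at hs
      exact mul_nonpos_of_nonneg_of_nonpos (exp_pos _).le
        (sub_nonpos.mpr (hle s (Ioo_subset_Icc_self hs)))
  intro t ht
  have := hanti (left_mem_Icc.mpr (ht.1.trans ht.2)) ht ht.1
  simp only [G, intervalIntegral.integral_same, neg_zero, exp_zero, one_mul, exp_neg] at this
  exact (inv_mul_le_iff₀ (exp_pos _)).mp this

theorem le_exp_integral_mul_of_hasDerivWithinAt {f f' γ : ℝ → ℝ} {a b : ℝ}
    (hγ : ContinuousOn γ (Icc a b)) (hf : ∀ s ∈ Icc a b, HasDerivWithinAt f (f' s) (Icc a b) s)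
    (hle : ∀ s ∈ Icc a b, f' s ≤ γ s * f s) :
    ∀ t ∈ Icc a b, f t ≤ exp (∫ s in a..t, γ s) * f a := by
  intro t ht
  have hab : a ≤ b := ht.1.trans ht.2
  obtain ⟨γ', hγ'_cont, hγ'_eq⟩ := hγ.exists_continuous_eqOn_Icc hab
  have hint : ∫ s in a..t, γ' s = ∫ s in a..t, γ s :=
    intervalIntegral.integral_congr (hγ'_eq.mono (uIcc_subset_Icc (left_mem_Icc.mpr hab) ht))
  rw [← hint]
  exact le_exp_integral_mul_of_hasDerivWithinAt_of_continuous hγ'_cont hf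
    (fun s hs => hγ'_eq hs ▸ hle s hs) t ht

theorem mean_square_growth_bound_general (N J : ℕ) (T : ℝ)
    (A : ℝ → Matrix (Fin N) (Fin N) ℂ) (B : Fin J → ℝ → Matrix (Fin N) (Fin N) ℂ)
    (Sg : ℝ → Matrix (Fin N) (Fin N) ℂ)
    (hpos : ∀ t ∈ Set.Icc (0 : ℝ) T, (Sg t).PosSemidef)
    (hODE : ∀ t ∈ Set.Icc (0 : ℝ) T, ∀ a b : Fin N,
      HasDerivWithinAt (fun s => Sg s a b)
        ((A t * Sg t + Sg t * (A t)ᴴ + ∑ j : Fin J, B j t * Sg t * (B j t)ᴴ) a b)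
        (Set.Icc 0 T) t)
    (γ : ℝ → ℝ) (hγ : ContinuousOn γ (Set.Icc 0 T))
    (hbound : ∀ t ∈ Set.Icc (0 : ℝ) T,
      (((γ t : ℂ) • (1 : Matrix (Fin N) (Fin N) ℂ)) - lyapK A B t).PosSemidef) :
    ∀ t ∈ Set.Icc (0 : ℝ) T,
      ((Sg t).trace).re ≤ Real.exp (2 * ∫ s in (0 : ℝ)..t, γ s) * ((Sg 0).trace).re := by
  have hrate : ∀ t ∈ Set.Icc (0 : ℝ) T,
      (A t * Sg t + Sg t * (A t)ᴴ + ∑ j, B j t * Sg t * (B j t)ᴴ).trace.re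
        ≤ 2 * γ t * (Sg t).trace.re := fun t ht => by
    rw [trace_lyapunov_eq_two_mul_trace_lyapK_mul, ← Complex.ofReal_ofNat, Complex.re_ofReal_mul]
    linarith [re_trace_mul_le_of_posSemidef_smul_one_sub (hbound t ht) (hpos t ht)]
  intro t ht
  rw [← intervalIntegral.integral_const_mul]
  exact le_exp_integral_mul_of_hasDerivWithinAt (continuousOn_const.mul hγ)
    (fun s hs => hasDerivWithinAt_re_trace fun i => hODE s hs i i) hrate t ht

/-- **Mean-square growth bound.** If the Hermitian positive semidefinite
solution `Σ` of the second-moment ODE satisfies `K(t) ⪯ γ(t) I`, then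
`tr(Σ(t)) ≤ exp(2∫_0^t γ) tr(Σ(0))`. -/
theorem mean_square_growth_bound (N J : ℕ) (T : ℝ) (hT : 0 < T)
    (A : ℝ → Matrix (Fin N) (Fin N) ℂ) (B : Fin J → ℝ → Matrix (Fin N) (Fin N) ℂ)
    (Sg : ℝ → Matrix (Fin N) (Fin N) ℂ)
    (hA : ContinuousOn A (Set.Icc 0 T))
    (hB : ∀ j, ContinuousOn (B j) (Set.Icc 0 T))
    (hpos : ∀ t ∈ Set.Icc (0 : ℝ) T, (Sg t).PosSemidef)
    (hODE : ∀ t ∈ Set.Icc (0 : ℝ) T, ∀ a b : Fin N,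
      HasDerivWithinAt (fun s => Sg s a b)
        ((A t * Sg t + Sg t * (A t)ᴴ + ∑ j : Fin J, B j t * Sg t * (B j t)ᴴ) a b)
        (Set.Icc 0 T) t)
    (γ : ℝ → ℝ) (hγ : ContinuousOn γ (Set.Icc 0 T))
    (hbound : ∀ t ∈ Set.Icc (0 : ℝ) T,
      (((γ t : ℂ) • (1 : Matrix (Fin N) (Fin N) ℂ)) - lyapK A B t).PosSemidef) :
    ∀ t ∈ Set.Icc (0 : ℝ) T,
      ((Sg t).trace).re ≤ Real.exp (2 * ∫ s in (0 : ℝ)..t, γ s) * ((Sg 0).trace).re :=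
  mean_square_growth_bound_general N J T A B Sg hpos hODE γ hγ hbound
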